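/- arXiv:1604.04904 — 2 statements merged into one kernel-verified Lean document; each statement's English description precedes it below -/
import Mathlib

section
/- Let h and k be coprime odd positive integers. Then k·B₁(h,k) + h·B₁(k,h) = (1/2)·(h-1)·(k-1). -/
/-!
Since `⌊hj/k⌋ = #{i ≥ 1 : ki ≤ hj}` and `∑_{i=1}^{g} (-1)^i (2i - 1) = (-1)^g g`, the left-hand
side is the signed sum `∑ (-1)^(i+j) w(i,j)` over the lattice points `0 < i < h`, `0 < j < k`,
where `w(i,j)` is `k(2i - 1)` if `ki < hj` and `h(2j - 1)` if `hj < ki` (coprimality keeps these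
points off the diagonal `ki = hj`). Averaging with the reflection `(i,j) ↦ (h - i, k - j)`, which
preserves the sign, turns `w` into `hk - (h + k)/2 - |ki - hj|`; as `k - 1` is even, the constant
contributes nothing, and it remains to show `∑ (-1)^(i+j) |ki - hj| = -(h - 1)(k - 1)/2`.
By the Chinese remainder theorem, `(i,j) ↦ (ki - hj) mod hk` maps these lattice points bijectively
onto the residues `μ < hk` divisible by neither `h` nor `k`, with `(-1)^μ μ` equal to
`(-1)^(i+j) |ki - hj|` up to a term `hk (-1)^(i+j)` on the points with `ki < hj`, whose signed
count vanishes by the same reflection. Finally `∑ (-1)^μ μ` over those residues follows by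
inclusion–exclusion from `∑_{μ < m} (-1)^μ μ = (m - 1)/2` for odd `m`.
-/

/-- The sawtooth function `((x))`: equals `x - ⌊x⌋ - 1/2` if `x` is not an integer,
and `0` if `x` is an integer. -/
def saw (x : ℚ) : ℚ := if x = (⌊x⌋ : ℚ) then 0 else x - ⌊x⌋ - 1/2

/-- `B₁(h,k) = Σ_{j=1}^{k-1} (-1)^{j+⌊hj/k⌋}·⌊hj/k⌋`. -/
noncomputable def B1 (h k : ℤ) : ℚ :=
  ∑ j ∈ Finset.Icc (1 : ℤ) (k - 1),
    (-1 : ℚ) ^ (j + ⌊((h * j : ℤ) : ℚ) / (k : ℚ)⌋) * (⌊((h * j : ℤ) : ℚ) / (k : ℚ)⌋ : ℚ)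

open Finset

lemma neg_one_zpow_eq_of_even_sub {K : Type*} [DivisionRing K] {a b : ℤ} (h : Even (a - b)) :
    (-1 : K) ^ a = (-1) ^ b := by
  rw [← Int.cast_negOnePow, ← Int.cast_negOnePow, (Int.negOnePow_eq_iff a b).2 h]

lemma neg_one_zpow_mul_sub_mul_eq {h k : ℤ} (hho : Odd h) (hko : Odd k) (i j : ℤ) :
    (-1 : ℚ) ^ (k * i - h * j) = (-1) ^ (i + j) := by
  obtain ⟨a, rfl⟩ := hho
  obtain ⟨b, rfl⟩ := hko
  exact neg_one_zpow_eq_of_even_sub ⟨b * i - a * j - j, by ring⟩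

lemma neg_one_zpow_reflect {h k : ℤ} (hho : Odd h) (hko : Odd k) (i j : ℤ) :
    (-1 : ℚ) ^ (h - i + (k - j)) = (-1) ^ (i + j) := by
  obtain ⟨a, rfl⟩ := hho
  obtain ⟨b, rfl⟩ := hko
  exact neg_one_zpow_eq_of_even_sub ⟨a + b + 1 - i - j, by ring⟩

lemma neg_one_zpow_emod_mul_emod {m n : ℤ} (hn : Odd n) (hm : |m| < n) :
    (-1 : ℚ) ^ (m % n) * ((m % n : ℤ) : ℚ) =
      (-1) ^ m * |(m : ℚ)| - if m < 0 then (n : ℚ) * (-1) ^ m else 0 := by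
  rw [abs_lt] at hm
  rcases le_or_gt 0 m with hm0 | hm0
  · rw [Int.emod_eq_of_lt hm0 hm.2, abs_of_nonneg (by exact_mod_cast hm0), if_neg hm0.not_gt,
      sub_zero]
  · rw [← Int.add_emod_right, Int.emod_eq_of_lt (by omega) (by omega),
      abs_of_neg (by exact_mod_cast hm0), if_pos hm0, zpow_add₀ (by norm_num), hn.neg_one_zpow]
    push_cast
    ring

lemma sum_Icc_neg_one_zpow {n : ℤ} (hn : 0 ≤ n) :
    ∑ i ∈ Icc 1 n, (-1 : ℚ) ^ i = ((-1) ^ n - 1) / 2 := by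
  induction n, hn using Int.leInduction with
  | base => simp
  | succ n hn ih =>
    rw [← insert_Icc_right_eq_Icc_add_one (by omega), sum_insert (by simp), ih,
      zpow_add_one₀ (by norm_num)]
    ring

lemma sum_Icc_neg_one_zpow_mul_two_mul_sub_one {n : ℤ} (hn : 0 ≤ n) :
    ∑ i ∈ Icc 1 n, (-1 : ℚ) ^ i * (2 * i - 1) = (-1) ^ n * n := by
  induction n, hn using Int.leInduction with
  | base => simp
  | succ n hn ih =>
    rw [← insert_Icc_right_eq_Icc_add_one (by omega), sum_insert (by simp), ih,
      zpow_add_one₀ (by norm_num)]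
    push_cast
    ring

lemma sum_Ico_neg_one_zpow_mul_self {m : ℤ} (hm : 0 ≤ m) :
    ∑ μ ∈ Ico 0 m, (-1 : ℚ) ^ μ * μ = ((1 - 2 * m) * (-1) ^ m - 1) / 4 := by
  induction m, hm using Int.leInduction with
  | base => norm_num
  | succ m hm ih =>
    rw [← insert_Ico_right_eq_Ico_add_one hm, sum_insert (by simp), ih,
      zpow_add_one₀ (by norm_num)]
    push_cast
    ring

lemma sum_Ico_neg_one_zpow_mul_self_of_odd {m : ℤ} (hm : 0 < m) (hmo : Odd m) :
    ∑ μ ∈ Ico 0 m, (-1 : ℚ) ^ μ * μ = (m - 1) / 2 := by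
  rw [sum_Ico_neg_one_zpow_mul_self hm.le, hmo.neg_one_zpow]
  ring

lemma sum_Ico_ite_dvd {d m : ℤ} (hd : 0 < d) (f : ℤ → ℚ) :
    ∑ μ ∈ Ico 0 (d * m), (if d ∣ μ then f μ else 0) = ∑ t ∈ Ico 0 m, f (d * t) := by
  have himage : (Ico 0 (d * m)).filter (d ∣ ·) = (Ico 0 m).image (d * ·) := by
    ext μ
    simp only [mem_filter, mem_Ico, mem_image]
    constructor
    · rintro ⟨⟨h0, hm⟩, t, rfl⟩
      exact ⟨t, ⟨by nlinarith, by nlinarith⟩, rfl⟩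
    · rintro ⟨t, ⟨h0, hm⟩, rfl⟩
      exact ⟨⟨by positivity, by nlinarith⟩, dvd_mul_right d t⟩
  rw [← sum_filter, himage, sum_image (mul_right_injective₀ hd.ne').injOn]

lemma sum_Ico_ite_dvd_neg_one_zpow_mul_self {d m : ℤ} (hd : 0 < d) (hdo : Odd d) (hm : 0 < m)
    (hmo : Odd m) :
    ∑ μ ∈ Ico 0 (d * m), (if d ∣ μ then (-1 : ℚ) ^ μ * μ else 0) = d * ((m - 1) / 2) := by
  rw [sum_Ico_ite_dvd hd, ← sum_Ico_neg_one_zpow_mul_self_of_odd hm hmo, mul_sum]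
  refine sum_congr rfl fun t _ => ?_
  rw [zpow_mul, hdo.neg_one_zpow]
  push_cast
  ring

lemma sum_Ico_ite_not_dvd_not_dvd {h k : ℤ} (hh : 0 < h) (hk : 0 < k) (hco : IsCoprime h k)
    (hho : Odd h) (hko : Odd k) :
    ∑ μ ∈ Ico 0 (h * k), (if ¬h ∣ μ ∧ ¬k ∣ μ then (-1 : ℚ) ^ μ * μ else 0) =
      -((h - 1) * (k - 1)) / 2 := by
  have hsplit : ∀ μ ∈ Ico 0 (h * k), (-1 : ℚ) ^ μ * μ =
      (if ¬h ∣ μ ∧ ¬k ∣ μ then (-1 : ℚ) ^ μ * μ else 0) +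
        (if h ∣ μ then (-1 : ℚ) ^ μ * μ else 0) + (if k ∣ μ then (-1 : ℚ) ^ μ * μ else 0) := by
    intro μ hμ
    by_cases hhμ : h ∣ μ <;> by_cases hkμ : k ∣ μ <;> simp only [hhμ, hkμ, not_true, not_false_iff,
      and_false, false_and, and_self, if_true, if_false, zero_add, add_zero]
    rw [mem_Ico] at hμ
    rw [Int.eq_zero_of_dvd_of_nonneg_of_lt hμ.1 hμ.2 (hco.mul_dvd hhμ hkμ)]
    simp
  have hmulK := sum_Ico_ite_dvd_neg_one_zpow_mul_self hk hko hh hho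
  rw [mul_comm k h] at hmulK
  have htotal := sum_congr rfl hsplit
  rw [sum_Ico_neg_one_zpow_mul_self_of_odd (mul_pos hh hk) (hho.mul hko), sum_add_distrib,
    sum_add_distrib, sum_Ico_ite_dvd_neg_one_zpow_mul_self hh hho hk hko, hmulK] at htotal
  push_cast at htotal
  linarith

lemma floor_intCast_div_intCast_of_pos (a : ℤ) {b : ℤ} (hb : 0 < b) :
    ⌊(a : ℚ) / (b : ℚ)⌋ = a / b := by
  lift b to ℕ using hb.le
  exact_mod_cast Rat.floor_intCast_div_natCast a b

lemma mul_ne_mul_of_mem_Icc {h k i j : ℤ} (hco : IsCoprime h k) (hj : j ∈ Icc 1 (k - 1)) :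
    k * i ≠ h * j := by
  rw [mem_Icc] at hj
  intro hij
  have := Int.le_of_dvd (by omega) (hco.symm.dvd_of_dvd_mul_left ⟨i, hij.symm⟩)
  omega

lemma eq_of_dvd_mul_sub {a b x y : ℤ} (hco : IsCoprime a b) (hd : a ∣ b * (x - y))
    (hx : x ∈ Ico 0 a) (hy : y ∈ Ico 0 a) : x = y := by
  rw [mem_Ico] at hx hy
  exact sub_eq_zero.1 <| Int.eq_zero_of_abs_lt_dvd (hco.dvd_of_dvd_mul_left hd)
    (abs_sub_lt_of_nonneg_of_lt hx.1 hx.2 hy.1 hy.2)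

lemma dvd_emod_iff_eq_zero {a b m n x : ℤ} (han : a ∣ n) (hco : IsCoprime a b)
    (hm : a ∣ m - b * x) (hx : x ∈ Ico 0 a) : a ∣ m % n ↔ x = 0 := by
  rw [mem_Ico] at hx
  rw [dvd_iff_dvd_of_dvd_sub (han.trans Int.dvd_emod_sub_self), dvd_iff_dvd_of_dvd_sub hm]
  exact ⟨fun hd => Int.eq_zero_of_dvd_of_nonneg_of_lt hx.1 hx.2 (hco.dvd_of_dvd_mul_left hd),
    by rintro rfl; simp⟩

lemma injOn_sub_mul_emod {h k : ℤ} (hco : IsCoprime h k) :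
    Set.InjOn (fun p : ℤ × ℤ => (k * p.1 - h * p.2) % (h * k)) ↑(Ico 0 h ×ˢ Ico 0 k) := by
  intro p hp q hq hpq
  simp only [coe_product, Set.mem_prod, mem_coe] at hp hq
  have hd : h * k ∣ (k * q.1 - h * q.2) - (k * p.1 - h * p.2) := Int.ModEq.dvd hpq
  have hd₁ : h ∣ k * (q.1 - p.1) := by
    have := dvd_add ((dvd_mul_right h k).trans hd) (dvd_mul_right h (q.2 - p.2))
    rwa [show k * q.1 - h * q.2 - (k * p.1 - h * p.2) + h * (q.2 - p.2) = k * (q.1 - p.1) by ring]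
      at this
  have hd₂ : k ∣ h * (p.2 - q.2) := by
    have := dvd_add ((dvd_mul_left k h).trans hd) (dvd_mul_right k (p.1 - q.1))
    rwa [show k * q.1 - h * q.2 - (k * p.1 - h * p.2) + k * (p.1 - q.1) = h * (p.2 - q.2) by ring]
      at this
  exact Prod.ext (eq_of_dvd_mul_sub hco hd₁ hq.1 hp.1).symm
    (eq_of_dvd_mul_sub hco.symm hd₂ hp.2 hq.2)

lemma image_sub_mul_emod {h k : ℤ} (hh : 0 < h) (hk : 0 < k) (hco : IsCoprime h k) :
    (Ico 0 h ×ˢ Ico 0 k).image (fun p : ℤ × ℤ => (k * p.1 - h * p.2) % (h * k)) =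
      Ico 0 (h * k) := by
  have hhk : 0 < h * k := mul_pos hh hk
  refine eq_of_subset_of_card_le (fun μ hμ => ?_) ?_
  · obtain ⟨p, -, rfl⟩ := mem_image.1 hμ
    exact mem_Ico.2 ⟨Int.emod_nonneg _ hhk.ne', Int.emod_lt_of_pos _ hhk⟩
  · rw [card_image_of_injOn (injOn_sub_mul_emod hco), card_product, Int.card_Ico, Int.card_Ico,
      Int.card_Ico, sub_zero, sub_zero, sub_zero, Int.toNat_mul hh.le hk.le]

lemma sum_rect_sub_mul_emod {h k : ℤ} (hh : 0 < h) (hk : 0 < k) (hco : IsCoprime h k)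
    (f : ℤ → ℚ) :
    ∑ p ∈ Ico 0 h ×ˢ Ico 0 k, f ((k * p.1 - h * p.2) % (h * k)) = ∑ μ ∈ Ico 0 (h * k), f μ := by
  rw [← image_sub_mul_emod hh hk hco, sum_image (injOn_sub_mul_emod hco)]

lemma sum_Ico_ite_not_dvd_not_dvd_eq_sum_rect {h k : ℤ} (hh : 0 < h) (hk : 0 < k)
    (hco : IsCoprime h k) (f : ℤ → ℚ) :
    ∑ μ ∈ Ico 0 (h * k), (if ¬h ∣ μ ∧ ¬k ∣ μ then f μ else 0) =
      ∑ p ∈ Icc 1 (h - 1) ×ˢ Icc 1 (k - 1), f ((k * p.1 - h * p.2) % (h * k)) := by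
  have hdvd_iff : ∀ p ∈ Ico 0 h ×ˢ Ico 0 k,
      (¬h ∣ (k * p.1 - h * p.2) % (h * k) ∧ ¬k ∣ (k * p.1 - h * p.2) % (h * k)) ↔
        p ∈ Icc 1 (h - 1) ×ˢ Icc 1 (k - 1) := by
    intro p hp
    rw [dvd_emod_iff_eq_zero (dvd_mul_right h k) hco ⟨-p.2, by ring⟩ (mem_product.1 hp).1,
      dvd_emod_iff_eq_zero (dvd_mul_left k h) hco.symm.neg_right ⟨p.1, by ring⟩
        (mem_product.1 hp).2]
    simp only [mem_product, mem_Icc, mem_Ico] at hp ⊢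
    omega
  have hsub : Icc 1 (h - 1) ×ˢ Icc 1 (k - 1) ⊆ Ico 0 h ×ˢ Ico 0 k := by
    intro p hp
    simp only [mem_product, mem_Icc, mem_Ico] at hp ⊢
    omega
  rw [← sum_rect_sub_mul_emod hh hk hco, ← sum_subset hsub]
  · exact sum_congr rfl fun p hp => if_pos ((hdvd_iff p (hsub hp)).2 hp)
  · exact fun p hp hpR => if_neg (mt (hdvd_iff p hp).1 hpR)

lemma sum_rect_reflect {a b c d : ℤ} (f : ℤ × ℤ → ℚ) :
    ∑ p ∈ Icc a b ×ˢ Icc c d, f p = ∑ p ∈ Icc a b ×ˢ Icc c d, f (a + b - p.1, c + d - p.2) := by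
  refine sum_nbij' (fun p => (a + b - p.1, c + d - p.2)) (fun p => (a + b - p.1, c + d - p.2))
    ?_ ?_ (fun p _ => by simp) (fun p _ => by simp) (fun p _ => by simp)
  all_goals
    intro p hp
    simp only [mem_product, mem_Icc] at hp ⊢
    omega

lemma sum_rect_neg_one_zpow {h k : ℤ} (hk : 0 < k) (hko : Odd k) :
    ∑ p ∈ Icc 1 (h - 1) ×ˢ Icc 1 (k - 1), (-1 : ℚ) ^ (p.1 + p.2) = 0 := by
  simp_rw [sum_product, zpow_add₀ (show (-1 : ℚ) ≠ 0 by norm_num), ← mul_sum,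
    sum_Icc_neg_one_zpow (show 0 ≤ k - 1 by omega), (hko.sub_odd odd_one).neg_one_zpow]
  simp

lemma sum_rect_neg_one_zpow_of_lt {h k : ℤ} (hk : 0 < k) (hco : IsCoprime h k) (hho : Odd h)
    (hko : Odd k) :
    ∑ p ∈ Icc 1 (h - 1) ×ˢ Icc 1 (k - 1),
      (if k * p.1 < h * p.2 then (-1 : ℚ) ^ (p.1 + p.2) else 0) = 0 := by
  have hreflect : ∑ p ∈ Icc 1 (h - 1) ×ˢ Icc 1 (k - 1),
      (if k * p.1 < h * p.2 then (-1 : ℚ) ^ (p.1 + p.2) else 0) =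
      ∑ p ∈ Icc 1 (h - 1) ×ˢ Icc 1 (k - 1),
      (if h * p.2 < k * p.1 then (-1 : ℚ) ^ (p.1 + p.2) else 0) := by
    have hlt_iff : ∀ p : ℤ × ℤ, k * (h - p.1) < h * (k - p.2) ↔ h * p.2 < k * p.1 :=
      fun p => by constructor <;> intro <;> linarith
    rw [sum_rect_reflect]
    simp only [add_sub_cancel, neg_one_zpow_reflect hho hko, hlt_iff]
  have hsplit : ∑ p ∈ Icc 1 (h - 1) ×ˢ Icc 1 (k - 1),
      ((if k * p.1 < h * p.2 then (-1 : ℚ) ^ (p.1 + p.2) else 0) +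
        (if h * p.2 < k * p.1 then (-1 : ℚ) ^ (p.1 + p.2) else 0)) = 0 := by
    refine (sum_congr rfl fun p hp => ?_).trans (sum_rect_neg_one_zpow (h := h) hk hko)
    have := mul_ne_mul_of_mem_Icc (i := p.1) hco (mem_product.1 hp).2
    rcases this.lt_or_gt with hlt | hgt
    · simp [hlt, hlt.not_gt]
    · simp [hgt, hgt.not_gt]
  rw [sum_add_distrib, ← hreflect] at hsplit
  linarith

lemma sum_rect_neg_one_zpow_mul_abs {h k : ℤ} (hh : 0 < h) (hk : 0 < k) (hco : IsCoprime h k)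
    (hho : Odd h) (hko : Odd k) :
    ∑ p ∈ Icc 1 (h - 1) ×ˢ Icc 1 (k - 1), (-1 : ℚ) ^ (p.1 + p.2) * |(k : ℚ) * p.1 - h * p.2| =
      -((h - 1) * (k - 1)) / 2 := by
  have hresidue : ∀ p ∈ Icc 1 (h - 1) ×ˢ Icc 1 (k - 1),
      (-1 : ℚ) ^ ((k * p.1 - h * p.2) % (h * k)) * (((k * p.1 - h * p.2) % (h * k) : ℤ) : ℚ) =
        (-1 : ℚ) ^ (p.1 + p.2) * |(k : ℚ) * p.1 - h * p.2| -
          (h * k : ℚ) * (if k * p.1 < h * p.2 then (-1 : ℚ) ^ (p.1 + p.2) else 0) := by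
    intro p hp
    simp only [mem_product, mem_Icc] at hp
    have hbound : |k * p.1 - h * p.2| < h * k := abs_lt.2 ⟨by nlinarith, by nlinarith⟩
    rw [neg_one_zpow_emod_mul_emod (hho.mul hko) hbound, neg_one_zpow_mul_sub_mul_eq hho hko]
    simp only [sub_lt_zero]
    push_cast
    split_ifs <;> ring
  calc ∑ p ∈ Icc 1 (h - 1) ×ˢ Icc 1 (k - 1), (-1 : ℚ) ^ (p.1 + p.2) * |(k : ℚ) * p.1 - h * p.2|
      = ∑ p ∈ Icc 1 (h - 1) ×ˢ Icc 1 (k - 1), (-1 : ℚ) ^ (p.1 + p.2) * |(k : ℚ) * p.1 - h * p.2| -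
          (h * k : ℚ) * ∑ p ∈ Icc 1 (h - 1) ×ˢ Icc 1 (k - 1),
            (if k * p.1 < h * p.2 then (-1 : ℚ) ^ (p.1 + p.2) else 0) := by
        rw [sum_rect_neg_one_zpow_of_lt hk hco hho hko, mul_zero, sub_zero]
    _ = ∑ μ ∈ Ico 0 (h * k), (if ¬h ∣ μ ∧ ¬k ∣ μ then (-1 : ℚ) ^ μ * μ else 0) := by
        rw [sum_Ico_ite_not_dvd_not_dvd_eq_sum_rect hh hk hco, mul_sum, ← sum_sub_distrib]
        exact (sum_congr rfl hresidue).symm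
    _ = -((h - 1) * (k - 1)) / 2 := sum_Ico_ite_not_dvd_not_dvd hh hk hco hho hko

lemma mul_B1_eq_sum {h k : ℤ} (hh : 0 < h) (hk : 0 < k) :
    (k : ℚ) * B1 h k = ∑ p ∈ Icc 1 (h - 1) ×ˢ Icc 1 (k - 1),
      if k * p.1 ≤ h * p.2 then (-1 : ℚ) ^ (p.1 + p.2) * (k * (2 * p.1 - 1)) else 0 := by
  rw [B1, mul_sum, sum_product_right]
  refine sum_congr rfl fun j hj => ?_
  rw [mem_Icc] at hj
  rw [floor_intCast_div_intCast_of_pos _ hk]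
  set g := h * j / k
  have hg : 0 ≤ g := Int.ediv_nonneg (by nlinarith) hk.le
  have hgh : g < h := Int.ediv_lt_of_lt_mul hk (by nlinarith)
  have hfilter : (Icc 1 (h - 1)).filter (fun i => k * i ≤ h * j) = Icc 1 g := by
    ext i
    have hiff : k * i ≤ h * j ↔ i ≤ g := by rw [Int.le_ediv_iff_mul_le hk, mul_comm]
    simp only [mem_filter, mem_Icc, hiff]
    omega
  rw [← sum_filter, hfilter]
  calc (k : ℚ) * ((-1) ^ (j + g) * (g : ℚ))
      = (-1) ^ j * k * ((-1) ^ g * g) := by rw [zpow_add₀ (by norm_num)]; ring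
    _ = (-1) ^ j * k * ∑ i ∈ Icc 1 g, (-1 : ℚ) ^ i * (2 * i - 1) := by
      rw [sum_Icc_neg_one_zpow_mul_two_mul_sub_one hg]
    _ = _ := by
      rw [mul_sum]
      refine sum_congr rfl fun i _ => ?_
      rw [zpow_add₀ (by norm_num)]
      ring

def latticeWeight (h k : ℤ) (p : ℤ × ℤ) : ℚ :=
  (if k * p.1 ≤ h * p.2 then (k : ℚ) * (2 * p.1 - 1) else 0) +
    (if h * p.2 ≤ k * p.1 then (h : ℚ) * (2 * p.2 - 1) else 0)

lemma mul_B1_add_mul_B1_eq_sum {h k : ℤ} (hh : 0 < h) (hk : 0 < k) :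
    (k : ℚ) * B1 h k + (h : ℚ) * B1 k h = ∑ p ∈ Icc 1 (h - 1) ×ˢ Icc 1 (k - 1),
      (-1 : ℚ) ^ (p.1 + p.2) * latticeWeight h k p := by
  have hswap : ∀ f : ℤ × ℤ → ℚ, ∑ q ∈ Icc 1 (k - 1) ×ˢ Icc 1 (h - 1), f q =
      ∑ p ∈ Icc 1 (h - 1) ×ˢ Icc 1 (k - 1), f p.swap := fun f => by
    rw [sum_product, sum_product_right]
    rfl
  rw [mul_B1_eq_sum hh hk, mul_B1_eq_sum hk hh, hswap, ← sum_add_distrib]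
  refine sum_congr rfl fun p _ => ?_
  simp only [latticeWeight, Prod.fst_swap, Prod.snd_swap, add_comm p.2 p.1]
  split_ifs <;> ring

lemma latticeWeight_add_latticeWeight_reflect {h k : ℤ} {p : ℤ × ℤ} (hp : k * p.1 ≠ h * p.2) :
    latticeWeight h k p + latticeWeight h k (h - p.1, k - p.2) =
      2 * h * k - h - k - 2 * |(k : ℚ) * p.1 - h * p.2| := by
  have hle₁ : k * (h - p.1) ≤ h * (k - p.2) ↔ h * p.2 ≤ k * p.1 := by
    constructor <;> intro <;> linarith
  have hle₂ : h * (k - p.2) ≤ k * (h - p.1) ↔ k * p.1 ≤ h * p.2 := by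
    constructor <;> intro <;> linarith
  simp only [latticeWeight, hle₁, hle₂]
  rcases hp.lt_or_gt with hlt | hgt
  · have hlt' : (k : ℚ) * p.1 < h * p.2 := by exact_mod_cast hlt
    simp only [abs_of_neg (sub_neg.2 hlt'), if_pos hlt.le, if_neg hlt.not_ge]
    push_cast
    ring
  · have hgt' : (h : ℚ) * p.2 < k * p.1 := by exact_mod_cast hgt
    simp only [abs_of_pos (sub_pos.2 hgt'), if_pos hgt.le, if_neg hgt.not_ge]
    push_cast
    ring

theorem stmt_4 (h k : ℤ) (hh : 0 < h) (hk : 0 < k) (hco : IsCoprime h k)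
    (hho : Odd h) (hko : Odd k) :
    (k : ℚ) * B1 h k + (h : ℚ) * B1 k h = (1 / 2) * ((h : ℚ) - 1) * ((k : ℚ) - 1) := by
  have hreflect := sum_rect_reflect (a := 1) (b := h - 1) (c := 1) (d := k - 1)
    fun p => (-1 : ℚ) ^ (p.1 + p.2) * latticeWeight h k p
  simp only [add_sub_cancel, neg_one_zpow_reflect hho hko] at hreflect
  have htwice : 2 * ((k : ℚ) * B1 h k + (h : ℚ) * B1 k h) =
      ∑ p ∈ Icc 1 (h - 1) ×ˢ Icc 1 (k - 1), ((2 * h * k - h - k : ℚ) * (-1) ^ (p.1 + p.2) -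
        2 * ((-1 : ℚ) ^ (p.1 + p.2) * |(k : ℚ) * p.1 - h * p.2|)) := by
    rw [two_mul, mul_B1_add_mul_B1_eq_sum hh hk]
    nth_rewrite 2 [hreflect]
    rw [← sum_add_distrib]
    refine sum_congr rfl fun p hp => ?_
    rw [← mul_add, latticeWeight_add_latticeWeight_reflect
      (mul_ne_mul_of_mem_Icc hco (mem_product.1 hp).2)]
    ring
  rw [sum_sub_distrib, ← mul_sum, ← mul_sum, sum_rect_neg_one_zpow hk hko,
    sum_rect_neg_one_zpow_mul_abs hh hk hco hho hko] at htwice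
  linarith
end

section
/- Let h and k be coprime odd positive integers. Then B₁(h,k) = -10h·s(h,k) + 4h·s(2h,k) + 4h·s(h,2k) + 1/(2k) - 1/2. -/
/-- The Dedekind sum `s(h,k) = Σ_{j=1}^{k-1} ((hj/k))·((j/k))`. -/
noncomputable def dedekindS (h k : ℤ) : ℚ :=
  ∑ j ∈ Finset.Icc (1 : ℤ) (k - 1),
    saw (((h * j : ℤ) : ℚ) / (k : ℚ)) * saw ((j : ℚ) / (k : ℚ))

/-!
Put `m = (h + k) / 2` and `y = mj/k`. Then `2y = hj/k + j`, so the sign `(-1)^(j + ⌊hj/k⌋)` is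
`(-1)^⌊2y⌋ = 2(((y + 1/2)) - ((y)))`. Together with `⌊x⌋ = x - ((x)) - 1/2` and the duplication
formula `((2y)) = ((y)) + ((y + 1/2))`, this writes `B₁(h,k)` as `2h s(h,k) - 4h s(m,k)` plus
`2 Σ (((y))² - ((y + 1/2))²)`; reindexing `j ↦ mj` turns the latter into `2 s(1,k) - s(1,2k)`,
an explicit quadratic sum. Finally, reindexing `j ↦ 2j` in `s(h,k)` and `s(m,k)` and duplicating
both factors gives `s(m,k) = 3 s(h,k) - s(2h,k) - s(h,2k)`.
-/

open Finset Function

lemma saw_intCast (n : ℤ) : saw n = 0 := by simp [saw]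

lemma saw_zero : saw 0 = 0 := by simpa using saw_intCast 0

lemma saw_add_intCast (x : ℚ) (n : ℤ) : saw (x + n) = saw x := by
  simp only [saw, Int.floor_add_intCast, Int.cast_add, add_left_inj]
  split_ifs <;> ring

lemma saw_of_lt_of_lt {x : ℚ} {n : ℤ} (h₁ : n < x) (h₂ : x < n + 1) :
    saw x = x - n - 1 / 2 := by
  have hfl : ⌊x⌋ = n := Int.floor_eq_iff.mpr ⟨h₁.le, h₂⟩
  rw [saw, if_neg (by rw [hfl]; exact h₁.ne'), hfl]

lemma saw_neg (x : ℚ) : saw (-x) = -saw x := by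
  by_cases hx : x = ⌊x⌋
  · rw [hx, ← Int.cast_neg, saw_intCast, saw_intCast, neg_zero]
  · have h₁ : (⌊x⌋ : ℚ) < x := (Int.floor_le x).lt_of_ne' hx
    have h₂ := Int.lt_floor_add_one x
    rw [saw_of_lt_of_lt h₁ h₂,
      saw_of_lt_of_lt (n := -⌊x⌋ - 1) (by push_cast; linarith) (by push_cast; linarith)]
    push_cast
    ring

lemma saw_half : saw (1 / 2) = 0 := by
  rw [saw_of_lt_of_lt (n := 0) (by norm_num) (by norm_num)]
  norm_num

lemma saw_two_mul (x : ℚ) : saw (2 * x) = saw x + saw (x + 1 / 2) := by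
  obtain ⟨t, n, ht₀, ht₁, rfl⟩ : ∃ (t : ℚ) (n : ℤ), 0 ≤ t ∧ t < 1 ∧ x = t + n :=
    ⟨Int.fract x, ⌊x⌋, Int.fract_nonneg x, Int.fract_lt_one x, (Int.fract_add_floor x).symm⟩
  rw [show 2 * (t + n) = 2 * t + ((2 * n : ℤ) : ℚ) by push_cast; ring,
    show t + n + 1 / 2 = t + 1 / 2 + n by ring, saw_add_intCast, saw_add_intCast, saw_add_intCast]
  rcases ht₀.eq_or_lt with rfl | ht₀
  · rw [mul_zero, zero_add, saw_half, add_zero]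
  rcases lt_trichotomy t (1 / 2) with ht | rfl | ht
  · rw [saw_of_lt_of_lt (x := 2 * t) (n := 0) (by push_cast; linarith) (by push_cast; linarith),
      saw_of_lt_of_lt (x := t) (n := 0) (by push_cast; linarith) (by push_cast; linarith),
      saw_of_lt_of_lt (x := t + 1 / 2) (n := 0) (by push_cast; linarith)
        (by push_cast; linarith)]
    ring
  · rw [saw_half, show (2 : ℚ) * (1 / 2) = ((1 : ℤ) : ℚ) by norm_num,
      show (1 / 2 + 1 / 2 : ℚ) = ((1 : ℤ) : ℚ) by norm_num, saw_intCast, add_zero]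
  · rw [saw_of_lt_of_lt (x := 2 * t) (n := 1) (by push_cast; linarith) (by push_cast; linarith),
      saw_of_lt_of_lt (x := t) (n := 0) (by push_cast; linarith) (by push_cast; linarith),
      saw_of_lt_of_lt (x := t + 1 / 2) (n := 1) (by push_cast; linarith)
        (by push_cast; linarith)]
    ring

lemma floor_eq_sub_saw {x : ℚ} (hx : ∀ n : ℤ, x ≠ n) : (⌊x⌋ : ℚ) = x - saw x - 1 / 2 := by
  rw [saw, if_neg (hx _)]
  ring

lemma neg_one_zpow_floor_two_mul {y : ℚ} (hy : ∀ n : ℤ, 2 * y ≠ n) :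
    (-1 : ℚ) ^ ⌊2 * y⌋ = 2 * (saw (y + 1 / 2) - saw y) := by
  set n := ⌊y⌋
  have h₀ : (n : ℚ) < y := (Int.floor_le y).lt_of_ne' fun h => hy (2 * n) (by push_cast; rw [h])
  have h₁ : y < n + 1 := Int.lt_floor_add_one y
  rcases lt_trichotomy y (n + 1 / 2) with hlt | heq | hgt
  · have hfl : ⌊2 * y⌋ = 2 * n :=
      Int.floor_eq_iff.mpr ⟨by push_cast; linarith, by push_cast; linarith⟩
    rw [hfl, saw_of_lt_of_lt (n := n) (by linarith) (by linarith), saw_of_lt_of_lt h₀ h₁, zpow_mul]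
    norm_num
  · exact absurd (by rw [heq]; push_cast; ring) (hy (2 * n + 1))
  · have hfl : ⌊2 * y⌋ = 2 * n + 1 :=
      Int.floor_eq_iff.mpr ⟨by push_cast; linarith, by push_cast; linarith⟩
    rw [hfl, saw_of_lt_of_lt (n := n + 1) (by push_cast; linarith) (by push_cast; linarith),
      saw_of_lt_of_lt h₀ h₁, zpow_add₀ (by norm_num), zpow_mul]
    norm_num
    ring

lemma neg_one_zpow_add_floor_mul_floor {x y : ℚ} {n : ℤ} (hxy : 2 * y = x + n)
    (hx : ∀ z : ℤ, x ≠ z) :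
    (-1 : ℚ) ^ (n + ⌊x⌋) * ⌊x⌋
      = 2 * (saw (y + 1 / 2) - saw y) * (x - saw y - saw (y + 1 / 2) - 1 / 2) := by
  have h2y : ∀ z : ℤ, 2 * y ≠ z := fun z h => hx (z - n) (by push_cast; linarith)
  have hsaw : saw x = saw y + saw (y + 1 / 2) := by rw [← saw_two_mul, hxy, saw_add_intCast]
  rw [show n + ⌊x⌋ = ⌊2 * y⌋ by rw [hxy, Int.floor_add_intCast, add_comm],
    neg_one_zpow_floor_two_mul h2y, floor_eq_sub_saw hx, hsaw]
  ring

lemma saw_div_of_pos_of_lt {j k : ℤ} (hj : 0 < j) (hjk : j < k) :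
    saw (j / k) = j / k - 1 / 2 := by
  have hk : (0 : ℚ) < k := by exact_mod_cast hj.trans hjk
  have h₀ : ((0 : ℤ) : ℚ) < j / k := by push_cast; positivity
  have h₁ : (j : ℚ) / k < (0 : ℤ) + 1 := by
    rw [Int.cast_zero, zero_add, div_lt_one hk]
    exact_mod_cast hjk
  rw [saw_of_lt_of_lt h₀ h₁, Int.cast_zero, sub_zero]

lemma periodic_saw_mul_div_add (a k : ℤ) (c : ℚ) :
    Periodic (fun j : ℤ => saw (a * j / k + c)) k := by
  intro j
  dsimp only
  rcases eq_or_ne k 0 with rfl | hk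
  · simp
  · have hk' : (k : ℚ) ≠ 0 := Int.cast_ne_zero.mpr hk
    rw [show (a : ℚ) * ↑(j + k) / k + c = a * j / k + c + a by push_cast; field_simp; ring,
      saw_add_intCast]

section PeriodicSums

variable {M : Type*} [AddCommMonoid M] {F : ℤ → M} {k : ℤ}

theorem Function.Periodic.sum_Ico_comp_mul (hF : Periodic F k) {a : ℤ} (ha : IsCoprime a k) :
    ∑ j ∈ Ico 0 k, F (a * j) = ∑ j ∈ Ico 0 k, F j := by
  have hmod : ∀ n, F (n % k) = F n := fun n => by
    rw [Int.emod_def, mul_comm, ← smul_eq_mul, hF.sub_zsmul_eq]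
  have hmaps : ∀ j ∈ Ico 0 k, a * j % k ∈ Ico 0 k := fun j hj => by
    rw [mem_Ico] at hj ⊢
    exact ⟨Int.emod_nonneg _ (by omega), Int.emod_lt_of_pos _ (by omega)⟩
  have hinj : Set.InjOn (fun j => a * j % k) (Ico 0 k : Set ℤ) := by
    intro i hi j hj hij
    simp only [coe_Ico, Set.mem_Ico] at hi hj
    have hdvd : k ∣ (i - j) * a := by
      rw [sub_mul, mul_comm i, mul_comm j]
      exact Int.ModEq.dvd hij.symm
    exact sub_eq_zero.mp <| Int.eq_zero_of_abs_lt_dvd (ha.symm.dvd_of_dvd_mul_right hdvd)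
      (abs_sub_lt_iff.mpr ⟨by omega, by omega⟩)
  calc ∑ j ∈ Ico 0 k, F (a * j) = ∑ j ∈ Ico 0 k, F (a * j % k) :=
        sum_congr rfl fun j _ => (hmod _).symm
    _ = ∑ j ∈ Ico 0 k, F j :=
      sum_nbij _ hmaps hinj (surjOn_of_injOn_of_card_le _ hmaps hinj le_rfl) fun _ _ => rfl

theorem Function.Periodic.sum_Ico_two_mul (hF : Periodic F (2 * k)) (hk : Odd k) :
    ∑ i ∈ Ico 0 (2 * k), F i = ∑ j ∈ Ico 0 k, (F (2 * j) + F (2 * j + k)) := by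
  rcases lt_or_ge k 0 with hk₀ | hk₀
  · rw [Ico_eq_empty_of_le (by omega), Ico_eq_empty_of_le (by omega), sum_empty, sum_empty]
  have hshift : ∑ i ∈ Ico k (2 * k), F i = ∑ j ∈ Ico 0 k, F (j + k) := by
    rw [sum_Ico_add', zero_add, two_mul]
  have hH : Periodic (fun j => F j + F (j + k)) k := fun j => by
    dsimp only
    rw [add_assoc, ← two_mul, hF, add_comm]
  rw [← Ico_union_Ico_eq_Ico hk₀ (by omega), sum_union (Ico_disjoint_Ico_consecutive _ _ _),
    hshift, ← sum_add_distrib]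
  exact (hH.sum_Ico_comp_mul (Int.isCoprime_two_left.mpr hk)).symm

lemma sum_Icc_one_sub_one_eq_sum_Ico (hF : F 0 = 0) :
    ∑ j ∈ Icc 1 (k - 1), F j = ∑ j ∈ Ico 0 k, F j := by
  refine sum_subset (fun j hj => ?_) fun j hj hj' => ?_
  · rw [mem_Icc] at hj
    rw [mem_Ico]
    omega
  · rw [mem_Ico] at hj
    rw [mem_Icc] at hj'
    rwa [show j = 0 by omega]

end PeriodicSums

lemma dedekindS_eq_sum_Ico (h k : ℤ) :
    dedekindS h k = ∑ j ∈ Ico 0 k, saw (h * j / k) * saw (j / k) := by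
  rw [dedekindS, sum_Icc_one_sub_one_eq_sum_Ico (by simp [saw_zero])]
  push_cast
  rfl

lemma sum_saw_mul_div_eq_zero (a k : ℤ) : ∑ j ∈ Ico 0 k, saw (a * j / k) = 0 := by
  have hF : Periodic (fun j : ℤ => saw (a * j / k)) k := by
    simpa using periodic_saw_mul_div_add a k 0
  have hrefl := hF.sum_Ico_comp_mul (isCoprime_one_left.neg_left : IsCoprime (-1) k)
  simp only [Int.cast_neg, neg_one_mul, mul_neg, neg_div, saw_neg, sum_neg_distrib] at hrefl
  linarith

lemma dedekindS_eq_sum_comp_mul (h : ℤ) {a k : ℤ} (ha : IsCoprime a k) :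
    dedekindS h k = ∑ j ∈ Ico 0 k, saw (h * (a * j) / k) * saw (a * j / k) := by
  have hF : Periodic (fun j : ℤ => saw (h * j / k) * saw (j / k)) k := by
    simpa using (periodic_saw_mul_div_add h k 0).mul (periodic_saw_mul_div_add 1 k 0)
  have hre := hF.sum_Ico_comp_mul ha
  push_cast at hre
  rw [dedekindS_eq_sum_Ico, hre]

lemma dedekindS_two_mul_left (h k : ℤ) :
    dedekindS (2 * h) k
      = dedekindS h k + ∑ j ∈ Ico 0 k, saw (h * j / k + 1 / 2) * saw (j / k) := by
  simp only [dedekindS_eq_sum_Ico, ← sum_add_distrib, ← add_mul, ← saw_two_mul]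
  push_cast
  simp only [mul_assoc, mul_div_assoc]

lemma dedekindS_two_mul_right {h k : ℤ} (hh : Odd h) (hk : Odd k) :
    dedekindS h (2 * k) = dedekindS h k
      + ∑ j ∈ Ico 0 k, saw (h * j / k + 1 / 2) * saw (j / k + 1 / 2) := by
  obtain ⟨c, rfl⟩ := hh
  have hk₀ : (k : ℚ) ≠ 0 := Int.cast_ne_zero.mpr (by rintro rfl; simp at hk)
  have hF : Periodic
      (fun i : ℤ => saw ((2 * c + 1 : ℤ) * i / (2 * k : ℤ)) * saw (i / (2 * k : ℤ))) (2 * k) := by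
    simpa using (periodic_saw_mul_div_add (2 * c + 1) (2 * k) 0).mul
      (periodic_saw_mul_div_add 1 (2 * k) 0)
  rw [dedekindS_eq_sum_Ico, dedekindS_eq_sum_Ico, hF.sum_Ico_two_mul hk, ← sum_add_distrib]
  refine sum_congr rfl fun j _ => ?_
  push_cast
  rw [show (2 * c + 1 : ℚ) * (2 * j + k) / (2 * k) = (2 * c + 1) * j / k + 1 / 2 + (c : ℤ) by
      field_simp; ring,
    saw_add_intCast]
  congr 2 <;> field_simp

lemma dedekindS_of_two_mul_eq_add {h k m : ℤ} (hm : 2 * m = h + k) (hh : Odd h) (hk : Odd k) :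
    dedekindS m k = 3 * dedekindS h k - dedekindS (2 * h) k - dedekindS h (2 * k) := by
  have h2 : IsCoprime 2 k := Int.isCoprime_two_left.mpr hk
  have hk₀ : (k : ℚ) ≠ 0 := Int.cast_ne_zero.mpr (by rintro rfl; simp at hk)
  have hmq : (2 * m : ℚ) = h + k := by exact_mod_cast hm
  have hsm :
      dedekindS m k = dedekindS h k + ∑ j ∈ Ico 0 k, saw (h * j / k) * saw (j / k + 1 / 2) := by
    rw [dedekindS_eq_sum_comp_mul m h2, dedekindS_eq_sum_Ico, ← sum_add_distrib]
    refine sum_congr rfl fun j _ => ?_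
    rw [show (m : ℚ) * ((2 : ℤ) * j) / k = h * j / k + (j : ℤ) by
        push_cast; field_simp; linear_combination (j : ℚ) * hmq,
      saw_add_intCast, show ((2 : ℤ) : ℚ) * j / k = 2 * (j / k) by push_cast; ring, saw_two_mul]
    ring
  have hcross : ∑ j ∈ Ico 0 k, saw (h * j / k + 1 / 2) * saw (j / k)
      + ∑ j ∈ Ico 0 k, saw (h * j / k) * saw (j / k + 1 / 2)
      + ∑ j ∈ Ico 0 k, saw (h * j / k + 1 / 2) * saw (j / k + 1 / 2) = 0 := by
    have hs := dedekindS_eq_sum_comp_mul h h2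
    rw [dedekindS_eq_sum_Ico] at hs
    have hdup : ∀ j : ℤ, saw (h * ((2 : ℤ) * j) / k) * saw ((2 : ℤ) * j / k)
        = saw (h * j / k) * saw (j / k)
          + (saw (h * j / k + 1 / 2) * saw (j / k) + saw (h * j / k) * saw (j / k + 1 / 2)
            + saw (h * j / k + 1 / 2) * saw (j / k + 1 / 2)) := by
      intro j
      rw [show (h : ℚ) * ((2 : ℤ) * j) / k = 2 * (h * j / k) by push_cast; ring,
        show ((2 : ℤ) : ℚ) * j / k = 2 * (j / k) by push_cast; ring, saw_two_mul, saw_two_mul]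
      ring
    simp only [hdup, sum_add_distrib] at hs
    linarith
  rw [hsm, dedekindS_two_mul_left, dedekindS_two_mul_right hh hk]
  linarith

lemma sum_range_succ_mul_sub_half_sq (M : ℕ) (c : ℚ) :
    ∑ i ∈ range M, ((i + 1) * c - 1 / 2) ^ 2
      = c ^ 2 * (M * (M + 1) * (2 * M + 1) / 6) - c * (M * (M + 1) / 2) + M / 4 := by
  induction M with
  | zero => simp
  | succ M ih =>
    rw [sum_range_succ, ih]
    push_cast
    ring

lemma dedekindS_one {n : ℤ} (hn : 0 < n) : dedekindS 1 n = (n - 1) * (n - 2) / (12 * n) := by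
  obtain ⟨N, rfl⟩ : ∃ N : ℕ, n = N + 1 := ⟨(n - 1).toNat, by omega⟩
  have hN : ((N : ℤ) + 1 - 1 + 1 - 1).toNat = N := by omega
  rw [dedekindS, Int.Icc_eq_finset_map, sum_map, hN]
  have hterm : ∀ i ∈ range N, saw (((1 * (1 + i : ℤ) : ℤ) : ℚ) / ((N + 1 : ℤ) : ℚ))
      * saw (((1 + i : ℤ) : ℚ) / ((N + 1 : ℤ) : ℚ)) = ((i + 1) * (1 / (N + 1)) - 1 / 2) ^ 2 := by
    intro i hi
    rw [mem_range] at hi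
    rw [one_mul, saw_div_of_pos_of_lt (by omega) (by omega)]
    push_cast
    ring
  simp only [Function.Embedding.trans_apply, Nat.castEmbedding_apply, addLeftEmbedding_apply]
  rw [sum_congr rfl hterm, sum_range_succ_mul_sub_half_sq]
  push_cast
  field_simp
  ring

lemma sum_saw_sq_sub_saw_add_half_sq {a k : ℤ} (ha : IsCoprime a k) (hk₀ : 0 < k) (hk : Odd k) :
    ∑ j ∈ Ico 0 k, (saw (a * j / k) ^ 2 - saw (a * j / k + 1 / 2) ^ 2) = -(k - 1) / (4 * k) := by
  have hF : Periodic (fun j : ℤ => saw (j / k) ^ 2 - saw (j / k + 1 / 2) ^ 2) k := by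
    simpa [sq] using ((periodic_saw_mul_div_add 1 k 0).mul (periodic_saw_mul_div_add 1 k 0)).sub
      ((periodic_saw_mul_div_add 1 k (1 / 2)).mul (periodic_saw_mul_div_add 1 k (1 / 2)))
  have hre := hF.sum_Ico_comp_mul ha
  push_cast at hre
  have hsq : ∑ j ∈ Ico 0 k, saw (j / k) ^ 2 = dedekindS 1 k := by
    simp [dedekindS_eq_sum_Ico, sq]
  have hsq_half :
      ∑ j ∈ Ico 0 k, saw (j / k + 1 / 2) ^ 2 = dedekindS 1 (2 * k) - dedekindS 1 k := by
    simp [dedekindS_two_mul_right odd_one hk, sq]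
  have hk' : (k : ℚ) ≠ 0 := by exact_mod_cast hk₀.ne'
  rw [hre, sum_sub_distrib, hsq, hsq_half, dedekindS_one hk₀, dedekindS_one (by omega)]
  push_cast
  field_simp
  ring

lemma intCast_mul_div_ne_intCast {h k j : ℤ} (hco : IsCoprime h k) (hj : 0 < j) (hjk : j < k)
    (n : ℤ) : ((h * j : ℤ) : ℚ) / k ≠ n := by
  intro heq
  have hk : (k : ℚ) ≠ 0 := by exact_mod_cast (hj.trans hjk).ne'
  rw [div_eq_iff hk] at heq
  have hdvd : k ∣ j * h := ⟨n, by rw [mul_comm j, mul_comm k]; exact_mod_cast heq⟩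
  exact absurd (Int.le_of_dvd hj (hco.symm.dvd_of_dvd_mul_right hdvd)) (not_le.mpr hjk)

lemma B1_eq_of_two_mul_eq_add {h k m : ℤ} (hm : 2 * m = h + k) (hco : IsCoprime h k)
    (hk₀ : 0 < k) (hk : Odd k) :
    B1 h k = 2 * h * dedekindS h k - 4 * h * dedekindS m k - (k - 1) / (2 * k) := by
  have hmk : IsCoprime m k := by
    have : IsCoprime (m * 2) k := by
      rw [mul_comm, hm]
      simpa using hco.add_mul_right_left 1
    exact this.of_mul_left_left
  have hmq : (2 * m : ℚ) = h + k := by exact_mod_cast hm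
  have hterm : ∀ j ∈ Icc 1 (k - 1),
      (-1 : ℚ) ^ (j + ⌊((h * j : ℤ) : ℚ) / (k : ℚ)⌋) * (⌊((h * j : ℤ) : ℚ) / (k : ℚ)⌋ : ℚ)
        = 2 * h * (saw (h * j / k) * saw (j / k)) - 4 * h * (saw (m * j / k) * saw (j / k))
          + (h - 1) * saw (h * j / k) - 2 * (h - 1) * saw (m * j / k)
          + 2 * (saw (m * j / k) ^ 2 - saw (m * j / k + 1 / 2) ^ 2) := by
    intro j hj
    rw [mem_Icc] at hj
    have hk' : (k : ℚ) ≠ 0 := by exact_mod_cast hk₀.ne'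
    have hxy : 2 * (m * j / k : ℚ) = ((h * j : ℤ) : ℚ) / k + (j : ℤ) := by
      push_cast
      field_simp
      linear_combination (j : ℚ) * hmq
    have hsaw : saw (h * j / k) = saw (m * j / k) + saw (m * j / k + 1 / 2) := by
      rw [← saw_two_mul, hxy, saw_add_intCast, Int.cast_mul]
    rw [neg_one_zpow_add_floor_mul_floor hxy
        (intCast_mul_div_ne_intCast hco (by omega) (by omega)),
      hsaw, saw_div_of_pos_of_lt (by omega) (by omega)]
    push_cast
    ring
  rw [B1, sum_congr rfl hterm,
    sum_Icc_one_sub_one_eq_sum_Ico (by simpa [saw_zero] using saw_half)]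
  simp only [sum_add_distrib, sum_sub_distrib, ← mul_sum, sum_saw_mul_div_eq_zero,
    ← dedekindS_eq_sum_Ico, sum_saw_sq_sub_saw_add_half_sq hmk hk₀ hk]
  ring

theorem stmt_9_general (h k : ℤ) (hk : 0 < k) (hco : IsCoprime h k)
    (hho : Odd h) (hko : Odd k) :
    B1 h k = -10 * (h : ℚ) * dedekindS h k + 4 * (h : ℚ) * dedekindS (2 * h) k
      + 4 * (h : ℚ) * dedekindS h (2 * k) + 1 / (2 * (k : ℚ)) - 1 / 2 := by
  obtain ⟨m, hm⟩ := hho.add_odd hko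
  rw [B1_eq_of_two_mul_eq_add (m := m) (by omega) hco hk hko,
    dedekindS_of_two_mul_eq_add (m := m) (by omega) hho hko]
  have hk' : (k : ℚ) ≠ 0 := by exact_mod_cast hk.ne'
  field_simp
  ring

theorem stmt_9 (h k : ℤ) (hh : 0 < h) (hk : 0 < k) (hco : IsCoprime h k)
    (hho : Odd h) (hko : Odd k) :
    B1 h k = -10 * (h : ℚ) * dedekindS h k + 4 * (h : ℚ) * dedekindS (2 * h) k
      + 4 * (h : ℚ) * dedekindS h (2 * k) + 1 / (2 * (k : ℚ)) - 1 / 2 :=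
  stmt_9_general h k hk hco hho hko
end
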